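/- arXiv:1405.3206 — 2 statements merged into one kernel-verified Lean document; each statement's English description precedes it below -/
import Mathlib

section
/- If (λ, w) is a classical solution of the critical cell problem at (x̄, p̄), then min_{y ∈ ℝ^m} |σ(x̄,y)^T p̄|² ≤ λ ≤ max_{y ∈ ℝ^m} |σ(x̄,y)^T p̄|² (the min and max are attained by periodicity and continuity). -/
open Matrix MeasureTheory Set

noncomputable section

/-- Euclidean norm of a vector in `ℝ^k`. -/
def en {k : ℕ} (v : Fin k → ℝ) : ℝ := Real.sqrt (v ⬝ᵥ v)

/-- Squared Euclidean norm. -/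
def sq2 {k : ℕ} (v : Fin k → ℝ) : ℝ := v ⬝ᵥ v

/-- Partial derivative in the `i`-th coordinate direction. -/
def pd {m : ℕ} (w : (Fin m → ℝ) → ℝ) (i : Fin m) (y : Fin m → ℝ) : ℝ :=
  fderiv ℝ w y (Pi.single i 1)

/-- Gradient. -/
def vgrad {m : ℕ} (w : (Fin m → ℝ) → ℝ) (y : Fin m → ℝ) : Fin m → ℝ := fun i => pd w i y

/-- Hessian matrix. -/
def vhess {m : ℕ} (w : (Fin m → ℝ) → ℝ) (y : Fin m → ℝ) : Matrix (Fin m) (Fin m) ℝ :=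
  Matrix.of fun i j => pd (pd w j) i y

/-- `ℤ^m`-periodicity. -/
def ZPer {m : ℕ} (w : (Fin m → ℝ) → ℝ) : Prop :=
  ∀ (y : Fin m → ℝ) (k : Fin m → ℤ), w (y + fun i => (k i : ℝ)) = w y

/-- Standing hypotheses on the data. -/
structure StandingHyp {n m r : ℕ}
    (σ : (Fin n → ℝ) → (Fin m → ℝ) → Matrix (Fin n) (Fin r) ℝ)
    (b : (Fin m → ℝ) → Fin m → ℝ)
    (τ : (Fin m → ℝ) → Matrix (Fin m) (Fin r) ℝ) : Prop where
  σ_bdd : ∃ C : ℝ, ∀ x y i j, |σ x y i j| ≤ C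
  σ_lip : ∃ L : ℝ, ∀ x x' y y' i j, |σ x y i j - σ x' y' i j| ≤ L * (en (x - x') + en (y - y'))
  σ_per : ∀ x y (k : Fin m → ℤ), σ x (y + fun l => (k l : ℝ)) = σ x y
  b_lip : ∃ L : ℝ, ∀ y y' i, |b y i - b y' i| ≤ L * en (y - y')
  b_per : ∀ y (k : Fin m → ℤ), b (y + fun l => (k l : ℝ)) = b y
  τ_lip : ∃ L : ℝ, ∀ y y' i j, |τ y i j - τ y' i j| ≤ L * en (y - y')
  τ_per : ∀ y (k : Fin m → ℤ), τ (y + fun l => (k l : ℝ)) = τ y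
  τ_nondeg : ∃ θ : ℝ, 0 < θ ∧ ∀ y ξ, θ * sq2 ξ ≤ sq2 ((τ y)ᵀ *ᵥ ξ)

/-- Classical solution of the critical cell problem at `(x, p)`. -/
def IsCriticalSol {n m r : ℕ}
    (σ : (Fin n → ℝ) → (Fin m → ℝ) → Matrix (Fin n) (Fin r) ℝ)
    (b : (Fin m → ℝ) → Fin m → ℝ)
    (τ : (Fin m → ℝ) → Matrix (Fin m) (Fin r) ℝ)
    (x p : Fin n → ℝ) (lam : ℝ) (w : (Fin m → ℝ) → ℝ) : Prop :=
  ContDiff ℝ 2 w ∧ ZPer w ∧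
    ∀ y, lam = sq2 ((σ x y)ᵀ *ᵥ p)
        + 2 * ((τ y *ᵥ ((σ x y)ᵀ *ᵥ p)) ⬝ᵥ vgrad w y)
        + b y ⬝ᵥ vgrad w y
        + sq2 ((τ y)ᵀ *ᵥ vgrad w y)
        + Matrix.trace (τ y * (τ y)ᵀ * vhess w y)

/-- Classical solution of the supercritical cell problem at `(x, p)`. -/
def IsSupercriticalSol {n m r : ℕ}
    (σ : (Fin n → ℝ) → (Fin m → ℝ) → Matrix (Fin n) (Fin r) ℝ)
    (b : (Fin m → ℝ) → Fin m → ℝ)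
    (τ : (Fin m → ℝ) → Matrix (Fin m) (Fin r) ℝ)
    (x p : Fin n → ℝ) (lam : ℝ) (w : (Fin m → ℝ) → ℝ) : Prop :=
  ContDiff ℝ 2 w ∧ ZPer w ∧
    ∀ y, lam = sq2 ((σ x y)ᵀ *ᵥ p) + b y ⬝ᵥ vgrad w y
        + Matrix.trace (τ y * (τ y)ᵀ * vhess w y)

/-- Classical solution of the subcritical cell problem at `(x, p)`. -/
def IsSubcriticalSol {n m r : ℕ}
    (σ : (Fin n → ℝ) → (Fin m → ℝ) → Matrix (Fin n) (Fin r) ℝ)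
    (τ : (Fin m → ℝ) → Matrix (Fin m) (Fin r) ℝ)
    (x p : Fin n → ℝ) (lam : ℝ) (w : (Fin m → ℝ) → ℝ) : Prop :=
  ContDiff ℝ 1 w ∧ ZPer w ∧
    ∀ y, lam = sq2 ((τ y)ᵀ *ᵥ vgrad w y + (σ x y)ᵀ *ᵥ p)

/-!
At a maximum point `y` of the periodic function `w`, `Dw y = 0` and `D²w y` is negative
semidefinite, so `tr (τ τᵀ D²w) = ∑ₖ τₖᵀ D²w τₖ ≤ 0` (with `τₖ` the columns of `τ y`) and the cell
equation collapses to `λ ≤ |σ(x̄,y)ᵀ p̄|²`. Symmetrically, a minimum point of `w` gives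
`|σ(x̄,y)ᵀ p̄|² ≤ λ`. Maxima and minima exist because continuous `ℤ^m`-periodic functions take
all their values on the compact cube `[0,1]^m`.
-/

open Filter Topology

section

variable {m : ℕ} {f : (Fin m → ℝ) → ℝ}

theorem ZPer.range_eq_image_Icc (hf : ZPer f) :
    range f = f '' Icc 0 1 := by
  refine (image_subset_range f _).antisymm' ?_
  rintro _ ⟨z, rfl⟩
  refine ⟨fun i => Int.fract (z i), ⟨fun i => Int.fract_nonneg _, fun i => (Int.fract_lt_one _).le⟩,
    ?_⟩
  rw [← hf z fun i => -⌊z i⌋]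
  congr 1
  ext i
  simp [Int.fract, sub_eq_add_neg]

theorem ZPer.isCompact_range (hper : ZPer f) (hf : Continuous f) :
    IsCompact (range f) :=
  hper.range_eq_image_Icc ▸ isCompact_Icc.image hf

theorem ZPer.exists_forall_le (hper : ZPer f) (hf : Continuous f) :
    ∃ y₀, ∀ y, f y₀ ≤ f y := by
  obtain ⟨_, ⟨y₀, rfl⟩, h⟩ := (hper.isCompact_range hf).exists_isLeast (range_nonempty f)
  exact ⟨y₀, fun y => h ⟨y, rfl⟩⟩

theorem ZPer.exists_forall_ge (hper : ZPer f) (hf : Continuous f) :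
    ∃ y₁, ∀ y, f y ≤ f y₁ := by
  obtain ⟨_, ⟨y₁, rfl⟩, h⟩ := (hper.isCompact_range hf).exists_isGreatest (range_nonempty f)
  exact ⟨y₁, fun y => h ⟨y, rfl⟩⟩

theorem continuous_of_abs_sub_le_mul_en {L : ℝ}
    (h : ∀ y y', |f y - f y'| ≤ L * en (y - y')) : Continuous f := by
  refine continuous_iff_continuousAt.mpr fun y' => tendsto_iff_norm_sub_tendsto_zero.mpr ?_
  refine squeeze_zero (fun _ => norm_nonneg _) (fun y => h y y') ?_
  have : Continuous fun y => L * en (y - y') := by unfold en; fun_prop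
  simpa [en] using this.tendsto y'

end

namespace StandingHyp

variable {n m r : ℕ} {σ : (Fin n → ℝ) → (Fin m → ℝ) → Matrix (Fin n) (Fin r) ℝ}
  {b : (Fin m → ℝ) → Fin m → ℝ} {τ : (Fin m → ℝ) → Matrix (Fin m) (Fin r) ℝ}

theorem continuous_sq2_mulVec (hyp : StandingHyp σ b τ) (x p : Fin n → ℝ) :
    Continuous fun y => sq2 ((σ x y)ᵀ *ᵥ p) := by
  obtain ⟨L, hL⟩ := hyp.σ_lip
  have hσ : Continuous (σ x) := continuous_pi fun i => continuous_pi fun j =>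
    continuous_of_abs_sub_le_mul_en (L := L) fun y y' => by
      simpa [en] using hL x x y y' i j
  have := hσ.matrix_transpose.matrix_mulVec continuous_const (B := fun _ => p)
  exact this.dotProduct this

theorem zPer_sq2_mulVec (hyp : StandingHyp σ b τ) (x p : Fin n → ℝ) :
    ZPer fun y => sq2 ((σ x y)ᵀ *ᵥ p) := fun y k => by
  simp only [hyp.σ_per]

end StandingHyp

theorem IsLocalMax.deriv_nonpos_of_hasDerivAt {g g' : ℝ → ℝ} {a g'' : ℝ} (hmax : IsLocalMax g a)
    (hg : ∀ᶠ t in 𝓝 a, HasDerivAt g (g' t) t) (hg' : HasDerivAt g' g'' a) : g'' ≤ 0 := by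
  by_contra! hpos
  have hg'a : g' a = 0 := hmax.hasDerivAt_eq_zero hg.self_of_nhds
  have hg'_pos : ∀ᶠ t in 𝓝[>] a, 0 < g' t := by
    filter_upwards [nhdsGT_le_nhdsNE a <|
      (hasDerivAt_iff_tendsto_slope.mp hg').eventually (eventually_gt_nhds hpos),
      self_mem_nhdsWithin] with t ht hat
    exact pos_of_slope_pos hat ht hg'a
  obtain ⟨u, hau, hu⟩ :=
    mem_nhdsGT_iff_exists_Ioo_subset.mp (hg'_pos.and (nhdsWithin_le_nhds hg))
  have hcont : ∀ t ∈ Ioo a u, ContinuousOn g (Icc a t) := by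
    intro t ht x hx
    rcases eq_or_lt_of_le hx.1 with rfl | hax
    · exact hg.self_of_nhds.continuousAt.continuousWithinAt
    · exact (hu ⟨hax, hx.2.trans_lt ht.2⟩).2.continuousAt.continuousWithinAt
  have hincr : ∀ t ∈ Ioo a u, g a < g t := by
    intro t ht
    obtain ⟨c, hc, hc_eq⟩ := exists_hasDerivAt_eq_slope g g' ht.1 (hcont t ht)
      fun x hx => (hu ⟨hx.1, hx.2.trans ht.2⟩).2
    have : 0 < (g t - g a) / (t - a) := hc_eq ▸ (hu ⟨hc.1, hc.2.trans ht.2⟩).1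
    linarith [(div_pos_iff_of_pos_right (sub_pos.mpr ht.1)).mp this]
  obtain ⟨t, hle, hlt⟩ :=
    ((hmax.filter_mono nhdsWithin_le_nhds).and (Ioo_mem_nhdsGT hau)).exists
  exact (hincr t hlt).not_ge hle

section SecondOrder

variable {E : Type*} [NormedAddCommGroup E] [NormedSpace ℝ E] {w : E → ℝ} {y : E}

theorem IsLocalMax.fderiv_fderiv_apply_self_nonpos (hw : ContDiff ℝ 2 w) (hmax : IsLocalMax w y)
    (v : E) : fderiv ℝ (fderiv ℝ w) y v v ≤ 0 := by
  have hline : ∀ t : ℝ, HasDerivAt (fun s : ℝ => y + s • v) v t := fun t => by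
    simpa using ((hasDerivAt_id t).smul_const v).const_add y
  have hw' : Differentiable ℝ (fderiv ℝ w) :=
    (hw.fderiv_right (m := 1) le_rfl).differentiable one_ne_zero
  refine IsLocalMax.deriv_nonpos_of_hasDerivAt (g := fun t => w (y + t • v))
    (g' := fun t => fderiv ℝ w (y + t • v) v) (a := 0) ?_ (Eventually.of_forall fun t => ?_) ?_
  · exact IsLocalMax.comp_continuous (g := fun t : ℝ => y + t • v) (by simpa using hmax)
      (hline 0).continuousAt
  · exact ((hw.differentiable two_ne_zero) _).hasFDerivAt.comp_hasDerivAt t (hline t)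
  · have := ((hw' _).hasFDerivAt.comp_hasDerivAt 0 (hline 0)).clm_apply (hasDerivAt_const 0 v)
    simpa using this

theorem IsLocalMin.fderiv_fderiv_apply_self_nonneg (hw : ContDiff ℝ 2 w) (hmin : IsLocalMin w y)
    (v : E) : 0 ≤ fderiv ℝ (fderiv ℝ w) y v v := by
  have hneg : fderiv ℝ (fderiv ℝ fun x => -w x) y = -fderiv ℝ (fderiv ℝ w) y := by
    rw [show (fderiv ℝ fun x => -w x) = fun z => -fderiv ℝ w z from funext fun z => fderiv_neg]
    exact fderiv_neg
  simpa [hneg] using hmin.neg.fderiv_fderiv_apply_self_nonpos hw.neg v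

end SecondOrder

theorem dotProduct_vhess_mulVec {m : ℕ} {w : (Fin m → ℝ) → ℝ} (hw : ContDiff ℝ 2 w)
    (y v : Fin m → ℝ) : v ⬝ᵥ (vhess w y *ᵥ v) = fderiv ℝ (fderiv ℝ w) y v v := by
  have hw' : DifferentiableAt ℝ (fderiv ℝ w) y :=
    (hw.fderiv_right (m := 1) le_rfl).differentiable one_ne_zero y
  have hvhess : vhess w y =
      LinearMap.toMatrix₂' ℝ (ContinuousLinearMap.toLinearMap₁₂ (fderiv ℝ (fderiv ℝ w) y)) := by
    ext i j
    change fderiv ℝ (fun z => fderiv ℝ w z (Pi.single j 1)) y (Pi.single i 1) = _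
    simp [fderiv_clm_apply hw' (differentiableAt_const _)]
  rw [hvhess, ← Matrix.toLinearMap₂'_apply', Matrix.toLinearMap₂'_toMatrix']
  rfl

theorem Matrix.trace_mul_transpose_mul_nonneg {m r : Type*} [Fintype m] [Fintype r]
    (T : Matrix m r ℝ) {H : Matrix m m ℝ} (hH : ∀ v, 0 ≤ v ⬝ᵥ (H *ᵥ v)) :
    0 ≤ trace (T * Tᵀ * H) := by
  have : trace (T * Tᵀ * H) = ∑ k, (fun i => T i k) ⬝ᵥ (H *ᵥ fun i => T i k) := by
    rw [Matrix.mul_assoc, trace_mul_comm]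
    refine Finset.sum_congr rfl fun k _ => ?_
    simp only [diag, mul_apply, transpose_apply, dotProduct, mulVec, Finset.sum_mul, Finset.mul_sum]
    rw [Finset.sum_comm]
    exact Finset.sum_congr rfl fun _ _ => Finset.sum_congr rfl fun _ _ => by ring
  exact this ▸ Finset.sum_nonneg fun k _ => hH _

theorem Matrix.trace_mul_transpose_mul_nonpos {m r : Type*} [Fintype m] [Fintype r]
    (T : Matrix m r ℝ) {H : Matrix m m ℝ} (hH : ∀ v, v ⬝ᵥ (H *ᵥ v) ≤ 0) :
    trace (T * Tᵀ * H) ≤ 0 := by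
  simpa [Matrix.mul_neg] using
    T.trace_mul_transpose_mul_nonneg (H := -H) fun v => by simpa [neg_mulVec] using hH v

theorem IsLocalExtr.vgrad_eq_zero {m : ℕ} {w : (Fin m → ℝ) → ℝ} {y : Fin m → ℝ}
    (h : IsLocalExtr w y) : vgrad w y = 0 := by
  ext i
  simp [vgrad, pd, h.fderiv_eq_zero]

namespace IsCriticalSol

variable {n m r : ℕ} {σ : (Fin n → ℝ) → (Fin m → ℝ) → Matrix (Fin n) (Fin r) ℝ}
  {b : (Fin m → ℝ) → Fin m → ℝ} {τ : (Fin m → ℝ) → Matrix (Fin m) (Fin r) ℝ}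
  {x p : Fin n → ℝ} {lam : ℝ} {w : (Fin m → ℝ) → ℝ} {y : Fin m → ℝ}

theorem eq_of_vgrad_eq_zero (h : IsCriticalSol σ b τ x p lam w) (hy : vgrad w y = 0) :
    lam = sq2 ((σ x y)ᵀ *ᵥ p) + trace (τ y * (τ y)ᵀ * vhess w y) := by
  simpa [hy, sq2] using h.2.2 y

theorem le_of_isLocalMax (h : IsCriticalSol σ b τ x p lam w) (hmax : IsLocalMax w y) :
    lam ≤ sq2 ((σ x y)ᵀ *ᵥ p) := by
  have htrace := (τ y).trace_mul_transpose_mul_nonpos fun v =>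
    dotProduct_vhess_mulVec h.1 y v ▸ hmax.fderiv_fderiv_apply_self_nonpos h.1 v
  linarith [h.eq_of_vgrad_eq_zero (IsLocalExtr.vgrad_eq_zero (.inr hmax))]

theorem ge_of_isLocalMin (h : IsCriticalSol σ b τ x p lam w) (hmin : IsLocalMin w y) :
    sq2 ((σ x y)ᵀ *ᵥ p) ≤ lam := by
  have htrace := (τ y).trace_mul_transpose_mul_nonneg fun v =>
    dotProduct_vhess_mulVec h.1 y v ▸ hmin.fderiv_fderiv_apply_self_nonneg h.1 v
  linarith [h.eq_of_vgrad_eq_zero (IsLocalExtr.vgrad_eq_zero (.inl hmin))]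

end IsCriticalSol

/-- the critical effective Hamiltonian lies between the min and max of
`|σ(x̄,y)ᵀ p̄|²` over `y` (min and max being attained, by periodicity and continuity). -/
theorem stmt2 {n m r : ℕ}
    (σ : (Fin n → ℝ) → (Fin m → ℝ) → Matrix (Fin n) (Fin r) ℝ)
    (b : (Fin m → ℝ) → Fin m → ℝ)
    (τ : (Fin m → ℝ) → Matrix (Fin m) (Fin r) ℝ)
    (hyp : StandingHyp σ b τ)
    (xbar pbar : Fin n → ℝ) (lam : ℝ) (w : (Fin m → ℝ) → ℝ)
    (h : IsCriticalSol σ b τ xbar pbar lam w) :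
    ∃ y₀ y₁ : Fin m → ℝ,
      (∀ y, sq2 ((σ xbar y₀)ᵀ *ᵥ pbar) ≤ sq2 ((σ xbar y)ᵀ *ᵥ pbar)) ∧
      (∀ y, sq2 ((σ xbar y)ᵀ *ᵥ pbar) ≤ sq2 ((σ xbar y₁)ᵀ *ᵥ pbar)) ∧
      sq2 ((σ xbar y₀)ᵀ *ᵥ pbar) ≤ lam ∧ lam ≤ sq2 ((σ xbar y₁)ᵀ *ᵥ pbar) := by
  have hf_cont := hyp.continuous_sq2_mulVec xbar pbar
  obtain ⟨y₀, hy₀⟩ := (hyp.zPer_sq2_mulVec xbar pbar).exists_forall_le hf_cont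
  obtain ⟨y₁, hy₁⟩ := (hyp.zPer_sq2_mulVec xbar pbar).exists_forall_ge hf_cont
  obtain ⟨ymin, hmin⟩ := h.2.1.exists_forall_le h.1.continuous
  obtain ⟨ymax, hmax⟩ := h.2.1.exists_forall_ge h.1.continuous
  exact ⟨y₀, y₁, hy₀, hy₁, (hy₀ ymin).trans (h.ge_of_isLocalMin (.of_forall hmin)),
    (h.le_of_isLocalMax (.of_forall hmax)).trans (hy₁ ymax)⟩

end
end

section
/- Let ν, C > 0 and let H : ℝ^n × ℝ^n → ℝ be continuous, convex in its second variable, and satisfy H(x,0) = 0, H(x,q) ≥ ν|q|² for all x, q ∈ ℝ^n, and |H(x,q) − H(z,q)| ≤ C(1 + |q|²)|x − z| for all x, z, q ∈ ℝ^n. Define the Lagrangian L(x,p) = sup_{q ∈ ℝ^n} (p·q − H(x,q)), which is finite. Then |L(x,p) − L(z,p)| ≤ C(1 + |p|²/ν²)|x − z| for all x, z, p ∈ ℝ^n. -/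
open Matrix

noncomputable section

/-- The Lagrangian: convex conjugate of `H` in the momentum variable. -/
def lagr {n : ℕ} (H : (Fin n → ℝ) → (Fin n → ℝ) → ℝ) (x p : Fin n → ℝ) : ℝ :=
  sSup (Set.range fun q : Fin n → ℝ => p ⬝ᵥ q - H x q)

lemma sq2_nonneg {k : ℕ} (v : Fin k → ℝ) : 0 ≤ sq2 v := by
  unfold sq2 dotProduct
  exact Finset.sum_nonneg fun i _ => mul_self_nonneg (v i)

lemma en_nonneg {k : ℕ} (v : Fin k → ℝ) : 0 ≤ en v := Real.sqrt_nonneg _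

lemma cs {k : ℕ} (p q : Fin k → ℝ) : (p ⬝ᵥ q) ^ 2 ≤ sq2 p * sq2 q := by
  have := Finset.sum_mul_sq_le_sq_mul_sq Finset.univ p q
  simpa [sq2, dotProduct, sq] using this

lemma key_ub {n : ℕ} (ν : ℝ) (hν : 0 < ν) (H : (Fin n → ℝ) → (Fin n → ℝ) → ℝ)
    (hHcoer : ∀ x q, ν * sq2 q ≤ H x q) (x p q : Fin n → ℝ) :
    p ⬝ᵥ q - H x q ≤ sq2 p / (4 * ν) := by
  have hr : 0 ≤ sq2 (p - (2 * ν) • q) := sq2_nonneg _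
  have hx : sq2 (p - (2 * ν) • q)
      = sq2 p - (2 * ν) * (2 * (p ⬝ᵥ q)) + (2 * ν) * ((2 * ν) * sq2 q) := by
    simp only [sq2, sub_dotProduct, dotProduct_sub, smul_dotProduct, dotProduct_smul,
      smul_eq_mul, dotProduct_comm q p]
    ring
  have h := hHcoer x q
  rw [hx] at hr
  rw [sub_le_iff_le_add, div_add' _ _ _ (by positivity : (4:ℝ) * ν ≠ 0),
    le_div_iff₀ (by positivity : (0:ℝ) < 4 * ν)]
  nlinarith [mul_le_mul_of_nonneg_left h (by positivity : (0:ℝ) ≤ 4 * ν)]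

lemma bdd {n : ℕ} (ν : ℝ) (hν : 0 < ν) (H : (Fin n → ℝ) → (Fin n → ℝ) → ℝ)
    (hHcoer : ∀ x q, ν * sq2 q ≤ H x q) (x p : Fin n → ℝ) :
    BddAbove (Set.range fun q : Fin n → ℝ => p ⬝ᵥ q - H x q) := by
  refine ⟨sq2 p / (4 * ν), ?_⟩
  rintro _ ⟨q, rfl⟩
  exact key_ub ν hν H hHcoer x p q

lemma lagr_nonneg {n : ℕ} (ν : ℝ) (hν : 0 < ν) (H : (Fin n → ℝ) → (Fin n → ℝ) → ℝ)
    (hH0 : ∀ x, H x 0 = 0) (hHcoer : ∀ x q, ν * sq2 q ≤ H x q) (x p : Fin n → ℝ) :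
    0 ≤ lagr H x p := by
  have h0 : (0:ℝ) ∈ Set.range fun q : Fin n → ℝ => p ⬝ᵥ q - H x q :=
    ⟨0, by simp [hH0 x]⟩
  exact le_csSup (bdd ν hν H hHcoer x p) h0

lemma en_sub_comm {k : ℕ} (x z : Fin k → ℝ) : en (x - z) = en (z - x) := by
  unfold en
  congr 1
  simp only [sub_dotProduct, dotProduct_sub, dotProduct_comm z x]
  ring

lemma one_side {n : ℕ} (ν C : ℝ) (hν : 0 < ν) (hC : 0 < C)
    (H : (Fin n → ℝ) → (Fin n → ℝ) → ℝ)
    (hH0 : ∀ x, H x 0 = 0)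
    (hHcoer : ∀ x q, ν * sq2 q ≤ H x q)
    (hHlip : ∀ x z q, |H x q - H z q| ≤ C * (1 + sq2 q) * en (x - z))
    (x z p : Fin n → ℝ) :
    lagr H x p ≤ lagr H z p + C * (1 + sq2 p / ν ^ 2) * en (x - z) := by
  have hLz : 0 ≤ lagr H z p := lagr_nonneg ν hν H hH0 hHcoer z p
  have hp2 : 0 ≤ sq2 p / ν ^ 2 := div_nonneg (sq2_nonneg p) (by positivity)
  have hterm : 0 ≤ C * (1 + sq2 p / ν ^ 2) * en (x - z) :=
    mul_nonneg (mul_nonneg hC.le (by linarith)) (en_nonneg _)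
  apply csSup_le (Set.range_nonempty _)
  rintro _ ⟨q, rfl⟩
  by_cases hq : p ⬝ᵥ q - H x q ≤ 0
  · linarith
  · push_neg at hq
    have hHx := hHcoer x q
    have hpq : ν * sq2 q ≤ p ⬝ᵥ q := by linarith
    have hq2 : sq2 q ≤ sq2 p / ν ^ 2 := by
      rcases eq_or_lt_of_le (sq2_nonneg q) with h0 | h0
      · rw [← h0]; exact hp2
      · have hcs := cs p q
        have h1 : (ν * sq2 q) ^ 2 ≤ (p ⬝ᵥ q) ^ 2 := by
          apply sq_le_sq' _ hpq
          nlinarith [sq2_nonneg q]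
        rw [le_div_iff₀ (pow_pos hν 2)]
        nlinarith [mul_pos (pow_pos hν 2) h0]
    have hz : p ⬝ᵥ q - H z q ≤ lagr H z p :=
      le_csSup (bdd ν hν H hHcoer z p) ⟨q, rfl⟩
    have hlip : H z q - H x q ≤ C * (1 + sq2 q) * en (x - z) := by
      have := hHlip x z q
      have := abs_le.1 this
      linarith [this.1]
    have hmono : C * (1 + sq2 q) * en (x - z) ≤ C * (1 + sq2 p / ν ^ 2) * en (x - z) := by
      apply mul_le_mul_of_nonneg_right _ (en_nonneg _)
      have h2 : (1 + sq2 q) ≤ 1 + sq2 p / ν ^ 2 := by linarith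
      exact mul_le_mul_of_nonneg_left h2 hC.le
    linarith
  
/-- Lipschitz estimate in `x` for the effective Lagrangian, under
coercivity and local Lipschitz continuity of the Hamiltonian. -/
theorem stmt16 {n : ℕ} (ν C : ℝ) (hν : 0 < ν) (hC : 0 < C)
    (H : (Fin n → ℝ) → (Fin n → ℝ) → ℝ)
    (hHc : Continuous fun q : (Fin n → ℝ) × (Fin n → ℝ) => H q.1 q.2)
    (hHconv : ∀ x, ConvexOn ℝ Set.univ (H x))
    (hH0 : ∀ x, H x 0 = 0)
    (hHcoer : ∀ x q, ν * sq2 q ≤ H x q)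
    (hHlip : ∀ x z q, |H x q - H z q| ≤ C * (1 + sq2 q) * en (x - z)) :
    ∀ x z p : Fin n → ℝ,
      BddAbove (Set.range fun q : Fin n → ℝ => p ⬝ᵥ q - H x q) ∧
      |lagr H x p - lagr H z p| ≤ C * (1 + sq2 p / ν ^ 2) * en (x - z) := by
  intro x z p
  refine ⟨bdd ν hν H hHcoer x p, ?_⟩
  rw [abs_sub_le_iff]
  constructor
  · have := one_side ν C hν hC H hH0 hHcoer hHlip x z p
    linarith
  · have := one_side ν C hν hC H hH0 hHcoer hHlip z x p
    rw [en_sub_comm z x] at this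
    linarith

end
end
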